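/- Let G be a finite group and C₁, …, Cₙ cyclic subgroups of G. The induced characters (1_{C₁})^G, …, (1_{Cₙ})^G span the ℂ-subspace of class functions spanned by the rational-valued characters of G if and only if every conjugacy class of cyclic subgroups of G contains some Cᵢ. -/

import Mathlib

/-!
Call `g` and `h` rationally conjugate when `⟨g⟩` and `⟨h⟩` are conjugate. A rational character
`χ` is constant on these classes: with `ζ` a primitive `o(g)`-th root of unity,
`χ(g ^ l) = P(ζ ^ l)` for a polynomial `P ∈ ℚ[X]` whose coefficients are eigenvalue
multiplicities of `g`, and `χ(g) = P(ζ) ∈ ℚ` forces `P(ζ ^ k) = P(ζ)` for every `k` prime to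
`o(g)`, since `ζ ^ k` is a root of the minimal polynomial of `ζ`.

Conversely the permutation characters `(1_C)^G` are rational, and `(1_⟨x⟩)^G` is a nonzero
multiple of the indicator of the class of `x` plus terms supported on elements generating smaller
cyclic subgroups. Hence if the `Cᵢ` meet every conjugacy class of cyclic subgroups, their induced
characters span every function constant on rational classes, in particular every rational
character. If the class of `⟨x⟩` is missed, the indicator of the class of `x`, which lies in the
span of the rational characters, is not a combination of the `(1_{Cᵢ})^G`: evaluating a relation
at a generator of a largest `Cᵢ` shows that the term of `(1_{Cᵢ})^G` can be discarded.
-/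

/-- The induced character `(1_C)^G` of the trivial character of a subgroup `C`. -/
noncomputable def indTriv (G : Type) [Group G] [Fintype G] (C : Subgroup G) : G → ℂ :=
  fun g => (Nat.card {x : G // x⁻¹ * g * x ∈ C} : ℂ) / (Nat.card C : ℂ)

/-- `χ : G → ℂ` is a character: the trace of a nonzero finite-dimensional complex rep. -/
def IsCharacter (G : Type) [Group G] (χ : G → ℂ) : Prop :=
  ∃ V : FDRep ℂ G, χ = V.character ∧ χ ≠ 0

/-- `χ` is an irreducible character of `G`. -/
def IsIrredChar (G : Type) [Group G] (χ : G → ℂ) : Prop :=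
  ∃ V : FDRep ℂ G, CategoryTheory.Simple V ∧ χ = V.character

/-- All values of `χ` are rational. -/
def IsRatValued {G : Type} (χ : G → ℂ) : Prop := ∀ g : G, ∃ q : ℚ, χ g = (q : ℂ)

/-- Subgroups `H` and `K` are conjugate in `G`. -/
def SubConj {G : Type} [Group G] (H K : Subgroup G) : Prop :=
  ∃ g : G, Subgroup.map (MulAut.conj g).toMonoidHom H = K

/-- The ℂ-subspace of `G → ℂ` spanned by the rational valued characters of `G`. -/
noncomputable def ratCharSpan (G : Type) [Group G] : Submodule ℂ (G → ℂ) :=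
  Submodule.span ℂ {χ : G → ℂ | IsCharacter G χ ∧ IsRatValued χ}

/-- The number of conjugacy classes of cyclic subgroups of `G`. -/
noncomputable def numCyclicClasses (G : Type) [Group G] : ℕ :=
  Nat.card (Quot (fun H K : {H : Subgroup G // IsCyclic ↥H} => SubConj H.1 K.1))

/-- Indicator function of the set of `g` with `⟨g⟩` conjugate to `⟨x⟩`. -/
noncomputable def Phi (G : Type) [Group G] (x : G) : G → ℂ := fun g =>
  letI := Classical.propDecidable
  if SubConj (Subgroup.zpowers g) (Subgroup.zpowers x) then 1 else 0

/-- The cyclotomic field `ℚ(e^{2πi/n})` as a subfield of `ℂ`. -/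
noncomputable def cycField (n : ℕ) : IntermediateField ℚ ℂ :=
  IntermediateField.adjoin ℚ ({Complex.exp (2 * Real.pi * Complex.I / n)} : Set ℂ)

/-- `ψ` is in the `Gal(ℚ(ζ_n)/ℚ)`-orbit of `χ` (acting on character values). -/
def galRel (G : Type) [Group G] (n : ℕ) (χ ψ : G → ℂ) : Prop :=
  ∃ σ : cycField n ≃ₐ[ℚ] cycField n,
    ∀ g : G, ∃ h : χ g ∈ cycField n, (σ ⟨χ g, h⟩ : ℂ) = ψ g

/-- The field `ℚ(χ)` generated by the values of `χ`. -/
noncomputable def charField (G : Type) (χ : G → ℂ) : IntermediateField ℚ ℂ :=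
  IntermediateField.adjoin ℚ (Set.range χ)

/-- The rationalization `χ^rat = ∑_{σ ∈ Gal(ℚ(χ)/ℚ)} χ^σ`. -/
noncomputable def ratzn (G : Type) [Group G] (χ : G → ℂ) : G → ℂ :=
  fun g => ∑ᶠ σ : charField G χ ≃ₐ[ℚ] charField G χ,
    (σ ⟨χ g, IntermediateField.subset_adjoin ℚ _ ⟨g, rfl⟩⟩ : ℂ)

/-- The induced character of a character `φ` of a subgroup `H`. -/
noncomputable def inducedChar (G : Type) [Group G] [Fintype G] (H : Subgroup G)
    (φ : H → ℂ) : G → ℂ := fun g =>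
  letI := Classical.propDecidable
  (Nat.card H : ℂ)⁻¹ * ∑ x : G, if h : x⁻¹ * g * x ∈ H then φ ⟨x⁻¹ * g * x, h⟩ else 0


section TraceOfFiniteOrder

open Finset Polynomial

theorem geom_sum_mul_geom_sum_of_pow_eq_one {R : Type*} [Ring R] {B : R} {n : ℕ}
    (hB : B ^ n = 1) :
    (∑ m ∈ range n, B ^ m) * ∑ m ∈ range n, B ^ m = n • ∑ m ∈ range n, B ^ m := by
  have hBS : B * ∑ m ∈ range n, B ^ m = ∑ m ∈ range n, B ^ m := by
    rw [← sub_eq_zero, ← sub_one_mul, mul_geom_sum, hB, sub_self]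
  have hpow (m : ℕ) : B ^ m * ∑ m ∈ range n, B ^ m = ∑ m ∈ range n, B ^ m := by
    induction m with
    | zero => rw [pow_zero, one_mul]
    | succ k ih => rw [pow_succ, mul_assoc, hBS, ih]
  rw [Finset.sum_mul, Finset.sum_congr rfl fun m _ => hpow m, sum_const, card_range]

theorem LinearMap.exists_trace_smul_geom_sum_eq_natCast {K V : Type*} [Field K] [AddCommGroup V]
    [Module K V] [FiniteDimensional K V] {B : Module.End K V} {n : ℕ} (hn : (n : K) ≠ 0)
    (hB : B ^ n = 1) :
    ∃ N : ℕ, trace K V ((n : K)⁻¹ • ∑ m ∈ Finset.range n, B ^ m) = N := by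
  have hidem : IsIdempotentElem ((n : K)⁻¹ • ∑ m ∈ Finset.range n, B ^ m) := by
    rw [IsIdempotentElem, smul_mul_smul_comm, geom_sum_mul_geom_sum_of_pow_eq_one hB,
      ← Nat.cast_smul_eq_nsmul K, smul_smul, mul_assoc, inv_mul_cancel₀ hn, mul_one]
  obtain ⟨p, hp⟩ := (LinearMap.isProj_iff_isIdempotentElem _).mpr hidem
  exact ⟨Module.finrank K p, hp.trace⟩

namespace IsPrimitiveRoot

variable {K : Type*} [Field K] {ζ : K} {n : ℕ}

theorem sum_div_pow_pow (hζ : IsPrimitiveRoot ζ n) {l m : ℕ} (hl : l < n) (hm : m < n) :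
    ∑ j ∈ range n, (ζ ^ l / ζ ^ m) ^ j = if l = m then (n : K) else 0 := by
  split_ifs with h
  · simp [h, hζ.ne_zero (by omega)]
  · have hne : ζ ^ l / ζ ^ m ≠ 1 := fun h1 =>
      h (hζ.pow_inj hl hm ((div_eq_one_iff_eq (pow_ne_zero _ (hζ.ne_zero (by omega)))).mp h1))
    rw [geom_sum_eq hne, div_pow, ← pow_mul, ← pow_mul, mul_comm l, mul_comm m, pow_mul,
      pow_mul, hζ.pow_eq_one, one_pow, one_pow, div_one, sub_self, zero_div]

theorem sum_fourierCoeff_mul_pow (hζ : IsPrimitiveRoot ζ n) (hn : (n : K) ≠ 0) (f : ℕ → K)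
    {l : ℕ} (hl : l < n) :
    ∑ j ∈ range n, ((n : K)⁻¹ * ∑ m ∈ range n, ((ζ ^ j)⁻¹) ^ m * f m) * (ζ ^ j) ^ l
      = f l := by
  have hterm (j m : ℕ) : (n : K)⁻¹ * (((ζ ^ j)⁻¹) ^ m * f m) * (ζ ^ j) ^ l
      = (n : K)⁻¹ * f m * (ζ ^ l / ζ ^ m) ^ j := by
    rw [div_pow, inv_pow, ← pow_mul, ← pow_mul, ← pow_mul, ← pow_mul]
    ring
  calc _ = ∑ m ∈ range n, (n : K)⁻¹ * f m * ∑ j ∈ range n, (ζ ^ l / ζ ^ m) ^ j := by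
        simp_rw [Finset.mul_sum, Finset.sum_mul, hterm]
        exact Finset.sum_comm
    _ = ∑ m ∈ range n, if l = m then f l else 0 := by
        refine Finset.sum_congr rfl fun m hm => ?_
        rw [hζ.sum_div_pow_pow hl (Finset.mem_range.mp hm)]
        split_ifs with h
        · rw [h]; field_simp
        · rw [mul_zero]
    _ = f l := by rw [Finset.sum_ite_eq, if_pos (Finset.mem_range.mpr hl)]

theorem aeval_pow_eq_of_coprime [CharZero K] (hζ : IsPrimitiveRoot ζ n) (hn : 0 < n)
    {P : ℚ[X]} {q : ℚ} (hP : aeval ζ P = q) {k : ℕ} (hk : k.Coprime n) :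
    aeval (ζ ^ k) P = q := by
  obtain ⟨R, hR⟩ : minpoly ℚ ζ ∣ P - C q := minpoly.dvd ℚ ζ (by simp [hP])
  have hmin : minpoly ℚ (ζ ^ k) = minpoly ℚ ζ := by
    rw [← cyclotomic_eq_minpoly_rat hζ hn,
      ← cyclotomic_eq_minpoly_rat (hζ.pow_of_coprime k hk) hn]
  have h := congrArg (aeval (ζ ^ k)) hR
  rw [map_mul, ← hmin, minpoly.aeval, zero_mul, map_sub, aeval_C, sub_eq_zero] at h
  simpa using h

end IsPrimitiveRoot

theorem LinearMap.exists_polynomial_trace_pow {K V : Type*} [Field K] [CharZero K]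
    [AddCommGroup V] [Module K V] [FiniteDimensional K V] {A : Module.End K V} {n : ℕ}
    (hn : 0 < n) (hA : A ^ n = 1) {ζ : K} (hζ : IsPrimitiveRoot ζ n) :
    ∃ P : ℚ[X], ∀ l : ℕ, trace K V (A ^ l) = aeval (ζ ^ l) P := by
  have hnK : (n : K) ≠ 0 := Nat.cast_ne_zero.mpr hn.ne'
  -- The averaged operator is the projection onto the `ζ ^ j`-eigenspace, so `N j` is the
  -- multiplicity of the eigenvalue `ζ ^ j`.
  have hcoeff (j : ℕ) : ∃ N : ℕ,
      (n : K)⁻¹ * ∑ m ∈ Finset.range n, ((ζ ^ j)⁻¹) ^ m * trace K V (A ^ m) = N := by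
    have hB : ((ζ ^ j)⁻¹ • A) ^ n = 1 := by
      rw [_root_.smul_pow, hA, inv_pow, ← pow_mul, mul_comm, pow_mul, hζ.pow_eq_one, one_pow,
        inv_one, one_smul]
    obtain ⟨N, hN⟩ := exists_trace_smul_geom_sum_eq_natCast hnK hB
    refine ⟨N, ?_⟩
    simpa only [_root_.smul_pow, map_smul, map_sum, smul_eq_mul] using hN
  choose N hN using hcoeff
  refine ⟨∑ j ∈ Finset.range n, C (N j : ℚ) * X ^ j, fun l => ?_⟩
  rw [pow_eq_pow_mod l hA, pow_eq_pow_mod l hζ.pow_eq_one,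
    ← hζ.sum_fourierCoeff_mul_pow hnK (fun m => trace K V (A ^ m)) (Nat.mod_lt l hn)]
  simp only [hN, map_sum, map_mul, aeval_X_pow, map_natCast]
  refine Finset.sum_congr rfl fun j _ => ?_
  rw [← pow_mul, ← pow_mul, mul_comm j, mul_comm]

theorem FDRep.character_pow_eq_of_coprime {G : Type} [Group G] [Finite G] (V : FDRep ℂ G)
    {g : G} {q : ℚ} (hq : V.character g = q) {k : ℕ} (hk : k.Coprime (orderOf g)) :
    V.character (g ^ k) = V.character g := by
  have hn := orderOf_pos g
  obtain ⟨ζ, hζ⟩ : ∃ ζ : ℂ, IsPrimitiveRoot ζ (orderOf g) :=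
    ⟨_, Complex.isPrimitiveRoot_exp _ hn.ne'⟩
  have hA : V.ρ g ^ orderOf g = 1 := by rw [← map_pow, pow_orderOf_eq_one, map_one]
  obtain ⟨P, hP⟩ := LinearMap.exists_polynomial_trace_pow hn hA hζ
  have hchar (l : ℕ) : V.character (g ^ l) = aeval (ζ ^ l) P := by
    rw [← hP, ← map_pow]; rfl
  have hPζ : aeval ζ P = q := by rw [← pow_one ζ, ← hchar, pow_one, hq]
  rw [hchar, hζ.aeval_pow_eq_of_coprime hn hPζ hk, hq]

end TraceOfFiniteOrder

open Subgroup

section SubConj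

variable {G : Type} [Group G]

theorem map_conj_map_conj (a b : G) (H : Subgroup G) :
    (H.map (MulAut.conj b).toMonoidHom).map (MulAut.conj a).toMonoidHom
      = H.map (MulAut.conj (a * b)).toMonoidHom := by
  rw [map_map]
  congr 1
  ext x
  simp [mul_assoc]

theorem SubConj.refl (H : Subgroup G) : SubConj H H :=
  ⟨1, by ext x; simp⟩

theorem SubConj.symm {H K : Subgroup G} (h : SubConj H K) : SubConj K H := by
  obtain ⟨a, rfl⟩ := h
  exact ⟨a⁻¹, by rw [map_conj_map_conj, inv_mul_cancel]; ext x; simp⟩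

theorem SubConj.trans {H K L : Subgroup G} (h : SubConj H K) (h' : SubConj K L) :
    SubConj H L := by
  obtain ⟨a, rfl⟩ := h
  obtain ⟨b, rfl⟩ := h'
  exact ⟨b * a, (map_conj_map_conj b a H).symm⟩

theorem subConj_of_le_map_conj [Finite G] {H K : Subgroup G} {x : G}
    (h : H ≤ K.map (MulAut.conj x).toMonoidHom) (hcard : Nat.card K ≤ Nat.card H) :
    SubConj K H :=
  ⟨x, (eq_of_le_of_card_ge h (by rwa [card_map_of_injective (MulAut.conj x).injective])).symm⟩

theorem card_le_of_le_map_conj [Finite G] {H K : Subgroup G} {x : G}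
    (h : H ≤ K.map (MulAut.conj x).toMonoidHom) : Nat.card H ≤ Nat.card K :=
  (card_le_of_le h).trans_eq (card_map_of_injective (MulAut.conj x).injective)

theorem conj_mem_iff_zpowers_le_map_conj {C : Subgroup G} {g x : G} :
    x⁻¹ * g * x ∈ C ↔ zpowers g ≤ C.map (MulAut.conj x).toMonoidHom := by
  rw [zpowers_le, mem_map_equiv, MulAut.conj_symm_apply]

end SubConj

def RatConj {G : Type} [Group G] (g h : G) : Prop := SubConj (zpowers g) (zpowers h)

section RatConj

variable {G : Type} [Group G]

theorem RatConj.refl (g : G) : RatConj g g := SubConj.refl _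

theorem RatConj.symm {g h : G} (hgh : RatConj g h) : RatConj h g := SubConj.symm hgh

theorem RatConj.trans {g h k : G} (hgh : RatConj g h) (hhk : RatConj h k) : RatConj g k :=
  SubConj.trans hgh hhk

end RatConj

section indTriv

variable {G : Type} [Group G] [Fintype G]

theorem indTriv_ne_zero_iff {C : Subgroup G} {g : G} :
    indTriv G C g ≠ 0 ↔ ∃ x : G, zpowers g ≤ C.map (MulAut.conj x).toMonoidHom := by
  have hC : (Nat.card C : ℂ) ≠ 0 := Nat.cast_ne_zero.mpr Nat.card_pos.ne'
  rw [indTriv, div_ne_zero_iff, and_iff_left hC, Nat.cast_ne_zero, Nat.card_ne_zero,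
    and_iff_left Subtype.finite, nonempty_subtype]
  simp only [conj_mem_iff_zpowers_le_map_conj]

theorem indTriv_self_ne_zero (x : G) : indTriv G (zpowers x) x ≠ 0 :=
  indTriv_ne_zero_iff.mpr ⟨1, by simp⟩

theorem indTriv_eq_of_ratConj (C : Subgroup G) {g h : G} (hgh : RatConj g h) :
    indTriv G C g = indTriv G C h := by
  obtain ⟨a, ha⟩ := hgh
  rw [MonoidHom.map_zpowers] at ha
  unfold indTriv
  congr 2
  refine Nat.card_congr (Equiv.subtypeEquiv (Equiv.mulLeft a) fun x => ?_)
  simp only [Equiv.coe_mulLeft, conj_mem_iff_zpowers_le_map_conj, ← ha, ← MonoidHom.map_zpowers,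
    ← map_conj_map_conj,
    map_le_map_iff_of_injective (f := (MulAut.conj a).toMonoidHom) (MulAut.conj a).injective]

theorem indTriv_eq_of_subConj {C D : Subgroup G} (hCD : SubConj C D) :
    indTriv G C = indTriv G D := by
  obtain ⟨a, rfl⟩ := hCD
  funext g
  unfold indTriv
  rw [card_map_of_injective (MulAut.conj a).injective]
  congr 2
  refine Nat.card_congr (Equiv.subtypeEquiv (Equiv.mulRight a⁻¹) fun x => ?_)
  simp only [Equiv.coe_mulRight, conj_mem_iff_zpowers_le_map_conj, map_conj_map_conj,
    inv_mul_cancel_right]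

end indTriv

section permRep

variable {G : Type} [Group G]

theorem card_conj_mem_eq_card_mul_card_fixed (C : Subgroup G) (g : G) :
    Nat.card {x : G // x⁻¹ * g * x ∈ C}
      = Nat.card C * Nat.card {q : G ⧸ C // g • q = q} := by
  have hfixed (x : G) : x⁻¹ * g * x ∈ C ↔ g • (x : G ⧸ C) = x := by
    rw [MulAction.Quotient.smul_mk, smul_eq_mul, eq_comm, QuotientGroup.eq, mul_assoc]
  calc Nat.card {x : G // x⁻¹ * g * x ∈ C}
      = Nat.card (QuotientGroup.mk ⁻¹' {q : G ⧸ C | g • q = q}) :=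
        Nat.card_congr (Equiv.subtypeEquivRight hfixed)
    _ = Nat.card (C × {q : G ⧸ C | g • q = q}) :=
        Nat.card_congr (QuotientGroup.preimageMkEquivSubgroupProdSet C _)
    _ = _ := Nat.card_prod _ _

variable [Fintype G]

theorem indTriv_eq_card_fixed (C : Subgroup G) (g : G) :
    indTriv G C g = Nat.card {q : G ⧸ C // g • q = q} := by
  rw [indTriv, card_conj_mem_eq_card_mul_card_fixed, Nat.cast_mul,
    mul_div_cancel_left₀ _ (Nat.cast_ne_zero.mpr Nat.card_pos.ne')]

noncomputable def permRep (C : Subgroup G) : FDRep ℂ G :=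
  FDRep.of (Representation.ofMulAction ℂ G (G ⧸ C))

theorem permRep_character (C : Subgroup G) (g : G) :
    (permRep C).character g = Nat.card {q : G ⧸ C // g • q = q} := by
  classical
  change LinearMap.trace ℂ _ (Representation.ofMulAction ℂ G (G ⧸ C) g) = _
  rw [LinearMap.trace_eq_matrix_trace ℂ (MonoidAlgebra.basis (G ⧸ C) ℂ), Matrix.trace]
  have hdiag (q : G ⧸ C) : (LinearMap.toMatrix (MonoidAlgebra.basis (G ⧸ C) ℂ)
      (MonoidAlgebra.basis (G ⧸ C) ℂ) (Representation.ofMulAction ℂ G (G ⧸ C) g)).diag q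
        = if g • q = q then 1 else 0 := by
    rw [Matrix.diag_apply, LinearMap.toMatrix_apply, MonoidAlgebra.basis_apply,
      Representation.ofMulAction_single]
    exact Finsupp.single_apply
  rw [Finset.sum_congr rfl fun q _ => hdiag q, Finset.sum_boole, Nat.card_eq_fintype_card,
    Fintype.card_subtype]

theorem indTriv_isCharacter (C : Subgroup G) : IsCharacter G (indTriv G C) := by
  refine ⟨permRep C, funext fun g => by rw [indTriv_eq_card_fixed, permRep_character], ?_⟩
  intro h
  have : Nonempty {q : G ⧸ C // (1 : G) • q = q} := ⟨⟨(1 : G), one_smul _ _⟩⟩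
  have h1 := congrFun h 1
  rw [indTriv_eq_card_fixed, Pi.zero_apply, Nat.cast_eq_zero] at h1
  exact Nat.card_pos.ne' h1

theorem indTriv_isRatValued (C : Subgroup G) : IsRatValued (indTriv G C) :=
  fun g =>
    ⟨Nat.card {q : G ⧸ C // g • q = q}, by rw [indTriv_eq_card_fixed, Rat.cast_natCast]⟩

theorem indTriv_mem_ratCharSpan (C : Subgroup G) : indTriv G C ∈ ratCharSpan G :=
  Submodule.subset_span ⟨indTriv_isCharacter C, indTriv_isRatValued C⟩

end permRep

def ratClassFun (G : Type) [Group G] : Submodule ℂ (G → ℂ) where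
  carrier := {f | ∀ g h : G, RatConj g h → f g = f h}
  add_mem' hf hf' g h hgh := by simp only [Pi.add_apply, hf g h hgh, hf' g h hgh]
  zero_mem' _ _ _ := rfl
  smul_mem' c f hf g h hgh := by simp only [Pi.smul_apply, hf g h hgh]

section ratClassFun

open scoped Classical

variable {G : Type} [Group G]

theorem Phi_apply (x g : G) : Phi G x g = if RatConj g x then 1 else 0 := rfl

theorem Phi_self (x : G) : Phi G x x = 1 := if_pos (RatConj.refl x)

theorem Phi_mem_ratClassFun (x : G) : Phi G x ∈ ratClassFun G := fun g h hgh => by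
  simp only [Phi_apply]
  congr 1
  exact propext ⟨hgh.symm.trans, hgh.trans⟩

theorem indTriv_mem_ratClassFun [Fintype G] (C : Subgroup G) : indTriv G C ∈ ratClassFun G :=
  fun _ _ => indTriv_eq_of_ratConj C

variable [Fintype G]

theorem eq_sum_smul_Phi {f : G → ℂ} (hf : f ∈ ratClassFun G) :
    f = ∑ y, (f y / (Finset.univ.filter (RatConj y)).card) • Phi G y := by
  have hcard {g y : G} (hgy : RatConj g y) :
      (Finset.univ.filter (RatConj y)).card = (Finset.univ.filter (RatConj g)).card := by
    congr 1
    exact Finset.filter_congr fun z _ => ⟨hgy.trans, hgy.symm.trans⟩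
  funext g
  have hterm (y : G) : (f y / (Finset.univ.filter (RatConj y)).card) * Phi G y g
      = if RatConj g y then f g / (Finset.univ.filter (RatConj g)).card else 0 := by
    rw [Phi_apply]
    split_ifs with hgy
    · rw [hf g y hgy, hcard hgy, mul_one]
    · rw [mul_zero]
  have hne : ((Finset.univ.filter (RatConj g)).card : ℂ) ≠ 0 :=
    Nat.cast_ne_zero.mpr (Finset.card_ne_zero.mpr ⟨g, by simp [RatConj.refl]⟩)
  simp only [Finset.sum_apply, Pi.smul_apply, smul_eq_mul, hterm, ← Finset.sum_filter,
    Finset.sum_const, nsmul_eq_mul, mul_div_cancel₀ _ hne]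

theorem mem_of_forall_Phi_mem {f : G → ℂ} (hf : f ∈ ratClassFun G)
    {S : Submodule ℂ (G → ℂ)} (hS : ∀ y, f y ≠ 0 → Phi G y ∈ S) : f ∈ S := by
  rw [eq_sum_smul_Phi hf]
  refine S.sum_mem fun y _ => ?_
  by_cases hy : f y = 0
  · simp [hy]
  · exact S.smul_mem _ (hS y hy)

end ratClassFun

section span

open Submodule

variable {G : Type} [Group G] [Fintype G] {ι : Type*}

/-- `indTriv G (zpowers x)` is a nonzero multiple of `Phi G x` plus a class function supported
on elements generating smaller cyclic subgroups; induct on `Nat.card (zpowers x)`. -/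
theorem Phi_mem_span_indTriv (D : ι → Subgroup G)
    (hD : ∀ y : G, ∃ i, SubConj (zpowers y) (D i)) (x : G) :
    Phi G x ∈ span ℂ (Set.range fun i => indTriv G (D i)) := by
  set S := span ℂ (Set.range fun i => indTriv G (D i))
  induction hn : Nat.card (zpowers x) using Nat.strong_induction_on generalizing x with
  | _ n ih =>
  obtain ⟨i, hi⟩ := hD x
  have hxS : indTriv G (zpowers x) ∈ S := indTriv_eq_of_subConj hi ▸ subset_span ⟨i, rfl⟩
  set c := indTriv G (zpowers x) x
  have hrest : indTriv G (zpowers x) - c • Phi G x ∈ S := by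
    refine mem_of_forall_Phi_mem (sub_mem (indTriv_mem_ratClassFun _)
      (smul_mem _ _ (Phi_mem_ratClassFun x))) fun y hy => ih _ ?_ y rfl
    have hyx : ¬ RatConj y x := fun hyx => hy <| by
      simp [c, Phi_apply, hyx, indTriv_eq_of_ratConj _ hyx]
    have hy' : indTriv G (zpowers x) y ≠ 0 := fun h0 => hy (by simp [h0, Phi_apply, hyx])
    obtain ⟨u, hu⟩ := indTriv_ne_zero_iff.mp hy'
    exact hn ▸ (card_le_of_le_map_conj hu).lt_of_ne fun heq =>
      hyx (subConj_of_le_map_conj hu heq.ge).symm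
  have hc : c ≠ 0 := indTriv_self_ne_zero x
  convert S.smul_mem c⁻¹ (sub_mem hxS hrest) using 1
  rw [sub_sub_cancel, smul_smul, inv_mul_cancel₀ hc, one_smul]

theorem ratClassFun_le_span_indTriv (D : ι → Subgroup G)
    (hD : ∀ y : G, ∃ i, SubConj (zpowers y) (D i)) :
    ratClassFun G ≤ span ℂ (Set.range fun i => indTriv G (D i)) := fun _ hf =>
  mem_of_forall_Phi_mem hf fun y _ => Phi_mem_span_indTriv D hD y

/-- At a generator `d` of a largest `C a`, the only `indTriv G (C i)` not vanishing are those
with `C i` conjugate to `C a`, so the coefficient of `indTriv G (C a)` can be discarded. -/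
theorem Phi_notMem_span_indTriv (C : ι → Subgroup G) (hC : ∀ i, IsCyclic (C i)) {x : G}
    (s : Finset ι) (hx : ∀ i ∈ s, ¬ SubConj (zpowers x) (C i)) :
    Phi G x ∉ span ℂ ((fun i => indTriv G (C i)) '' s) := by
  classical
  induction s using Finset.induction_on_max_value (fun i => Nat.card (C i)) with
  | empty =>
    simp only [Finset.coe_empty, Set.image_empty, span_empty, mem_bot]
    exact fun h => one_ne_zero (Phi_self x ▸ congrFun h x)
  | insert a s _ hmax ih =>
    simp only [Finset.mem_insert, forall_eq_or_imp] at hx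
    rw [Finset.coe_insert, Set.image_insert_eq, mem_span_insert]
    rintro ⟨b, w, hw, hPhi⟩
    refine ih hx.2 (hPhi ▸ add_mem ?_ hw)
    by_cases hconj : ∃ i ∈ s, SubConj (C a) (C i)
    · obtain ⟨i, hi, hai⟩ := hconj
      exact indTriv_eq_of_subConj hai ▸ smul_mem _ _ (subset_span ⟨i, hi, rfl⟩)
    · obtain ⟨d, hd⟩ := (C a).isCyclic_iff_exists_zpowers_eq_top.mp (hC a)
      have hker :
          span ℂ ((fun i => indTriv G (C i)) '' s) ≤ LinearMap.ker (LinearMap.proj d) := by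
        refine span_le.mpr ?_
        rintro _ ⟨i, hi, rfl⟩
        by_contra h
        obtain ⟨u, hu⟩ := indTriv_ne_zero_iff.mp h
        have hid : SubConj (C i) (zpowers d) := subConj_of_le_map_conj hu (hd ▸ hmax i hi)
        exact hconj ⟨i, hi, hd ▸ hid.symm⟩
      have hwd : w d = 0 := hker hw
      have hPhid : Phi G x d = 0 :=
        if_neg fun hdx => hx.1 (hdx.symm.trans (hd ▸ SubConj.refl _))
      have hb : b * indTriv G (C a) d = 0 := by
        simpa [hwd, hPhid] using (congrFun hPhi d).symm
      rw [mul_eq_zero, ← hd, or_iff_left (indTriv_self_ne_zero d)] at hb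
      simp [hb]

end span

section ratChar

variable {G : Type} [Group G] [Finite G]

theorem coprime_orderOf_of_zpowers_pow_eq {x : G} {k : ℕ} (h : zpowers (x ^ k) = zpowers x) :
    k.Coprime (orderOf x) := by
  have hord : orderOf x / (orderOf x).gcd k = orderOf x := by
    rw [← orderOf_pow, ← Nat.card_zpowers, h, Nat.card_zpowers]
  rw [Nat.div_eq_self, or_iff_right (orderOf_pos x).ne'] at hord
  exact Nat.coprime_comm.mp hord

theorem FDRep.character_eq_of_zpowers_eq (V : FDRep ℂ G) (hV : IsRatValued V.character)
    {x y : G} (h : zpowers x = zpowers y) : V.character x = V.character y := by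
  obtain ⟨k, rfl⟩ : y ∈ Submonoid.powers x :=
    (isOfFinOrder_of_finite x).mem_powers_iff_mem_zpowers.mpr (h ▸ mem_zpowers y)
  obtain ⟨q, hq⟩ := hV x
  exact (V.character_pow_eq_of_coprime hq (coprime_orderOf_of_zpowers_pow_eq h.symm)).symm

theorem FDRep.character_eq_of_ratConj (V : FDRep ℂ G) (hV : IsRatValued V.character)
    {g h : G} (hgh : RatConj g h) : V.character g = V.character h := by
  obtain ⟨a, ha⟩ := hgh
  rw [MonoidHom.map_zpowers] at ha
  rw [← V.character_eq_of_zpowers_eq hV ha]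
  exact (V.char_conj g a).symm

theorem ratCharSpan_le_ratClassFun : ratCharSpan G ≤ ratClassFun G :=
  Submodule.span_le.mpr fun _ ⟨⟨V, hV, _⟩, hrat⟩ _ _ hgh =>
    hV ▸ V.character_eq_of_ratConj (hV ▸ hrat) hgh

end ratChar

theorem stmt1 (G : Type) [Group G] [Fintype G] (n : ℕ) (C : Fin n → Subgroup G)
    (hC : ∀ i, IsCyclic ↥(C i)) :
    Submodule.span ℂ (Set.range fun i => indTriv G (C i)) = ratCharSpan G ↔
      ∀ H : Subgroup G, IsCyclic ↥H → ∃ i, SubConj H (C i) := by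
  constructor
  · intro hspan H hH
    obtain ⟨x, rfl⟩ := H.isCyclic_iff_exists_zpowers_eq_top.mp hH
    by_contra hx
    have hPhi : Phi G x ∈ ratCharSpan G :=
      Submodule.span_le.mpr (Set.range_subset_iff.mpr fun y => indTriv_mem_ratCharSpan _)
        (Phi_mem_span_indTriv zpowers (fun y => ⟨y, SubConj.refl _⟩) x)
    rw [← hspan, ← Set.image_univ, ← Finset.coe_univ] at hPhi
    exact Phi_notMem_span_indTriv C hC Finset.univ (fun i _ hi => hx ⟨i, hi⟩) hPhi
  · intro hcov
    refine le_antisymm (Submodule.span_le.mpr ?_) (ratCharSpan_le_ratClassFun.trans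
      (ratClassFun_le_span_indTriv C fun y => hcov _ inferInstance))
    rintro _ ⟨i, rfl⟩
    exact indTriv_mem_ratCharSpan _
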